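/- Let φ(p) = |pA|·|pB|·|pC| for p in the closed triangle Δ with vertices A, B, C. Then ln φ is harmonic on the interior of Δ minus the vertices, and consequently φ attains its maximum over Δ on the boundary ∂Δ. -/

import Mathlib

open Real

/-- The Euclidean distance on `ℝ × ℝ` (the `Prod` metric in Mathlib is the sup metric,
so we spell out the Euclidean one). -/
noncomputable def eucDist (p q : ℝ × ℝ) : ℝ :=
  Real.sqrt ((p.1 - q.1) ^ 2 + (p.2 - q.2) ^ 2)

/-- A function on `ℝ × ℝ` is harmonic on a set if it is twice continuously
differentiable there and its Laplacian vanishes at every point of the set. -/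
def HarmonicOn (f : ℝ × ℝ → ℝ) (s : Set (ℝ × ℝ)) : Prop :=
  ContDiffOn ℝ 2 f s ∧ ∀ p ∈ s,
    deriv (deriv (fun x => f (x, p.2))) p.1 + deriv (deriv (fun y => f (p.1, y))) p.2 = 0

private lemma hd_log_q (a c : ℝ) (x : ℝ) (h : (x - a) ^ 2 + c ≠ 0) :
    HasDerivAt (fun x => Real.log ((x - a) ^ 2 + c)) (2 * (x - a) / ((x - a) ^ 2 + c)) x := by
  have h1 : HasDerivAt (fun x : ℝ => (x - a) ^ 2 + c) (2 * (x - a)) x := by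
    simpa using (((hasDerivAt_id x).sub_const a).pow 2).add_const c
  exact h1.log h

private lemma slice_deriv2 (a₁ a₂ a₃ c₁ c₂ c₃ t : ℝ)
    (h₁ : (t - a₁) ^ 2 + c₁ ≠ 0) (h₂ : (t - a₂) ^ 2 + c₂ ≠ 0) (h₃ : (t - a₃) ^ 2 + c₃ ≠ 0) :
    deriv (deriv (fun x => (Real.log ((x - a₁) ^ 2 + c₁) + Real.log ((x - a₂) ^ 2 + c₂) +
        Real.log ((x - a₃) ^ 2 + c₃)) / 2)) t
      = (c₁ - (t - a₁) ^ 2) / ((t - a₁) ^ 2 + c₁) ^ 2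
        + (c₂ - (t - a₂) ^ 2) / ((t - a₂) ^ 2 + c₂) ^ 2
        + (c₃ - (t - a₃) ^ 2) / ((t - a₃) ^ 2 + c₃) ^ 2 := by
  set g : ℝ → ℝ := fun x => (x - a₁) / ((x - a₁) ^ 2 + c₁) + (x - a₂) / ((x - a₂) ^ 2 + c₂)
      + (x - a₃) / ((x - a₃) ^ 2 + c₃) with hg
  have hev : ∀ᶠ x in nhds t, ((x - a₁) ^ 2 + c₁ ≠ 0) ∧ ((x - a₂) ^ 2 + c₂ ≠ 0) ∧
      ((x - a₃) ^ 2 + c₃ ≠ 0) := by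
    have c1 : Continuous fun x : ℝ => (x - a₁) ^ 2 + c₁ :=
      ((continuous_id.sub continuous_const).pow 2).add continuous_const
    have c2 : Continuous fun x : ℝ => (x - a₂) ^ 2 + c₂ :=
      ((continuous_id.sub continuous_const).pow 2).add continuous_const
    have c3 : Continuous fun x : ℝ => (x - a₃) ^ 2 + c₃ :=
      ((continuous_id.sub continuous_const).pow 2).add continuous_const
    exact ((c1.continuousAt.eventually_ne h₁).and
      ((c2.continuousAt.eventually_ne h₂).and (c3.continuousAt.eventually_ne h₃)))
  have hG : ∀ x, (x - a₁) ^ 2 + c₁ ≠ 0 → (x - a₂) ^ 2 + c₂ ≠ 0 → (x - a₃) ^ 2 + c₃ ≠ 0 →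
      HasDerivAt (fun x => (Real.log ((x - a₁) ^ 2 + c₁) + Real.log ((x - a₂) ^ 2 + c₂) +
        Real.log ((x - a₃) ^ 2 + c₃)) / 2) (g x) x := by
    intro x hx1 hx2 hx3
    have := (((hd_log_q a₁ c₁ x hx1).add (hd_log_q a₂ c₂ x hx2)).add
      (hd_log_q a₃ c₃ x hx3)).div_const 2
    refine this.congr_deriv ?_
    simp only [hg]; ring
  have hder : deriv (fun x => (Real.log ((x - a₁) ^ 2 + c₁) + Real.log ((x - a₂) ^ 2 + c₂) +
      Real.log ((x - a₃) ^ 2 + c₃)) / 2) =ᶠ[nhds t] g := by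
    filter_upwards [hev] with x hx
    exact (hG x hx.1 hx.2.1 hx.2.2).deriv
  rw [hder.deriv_eq]
  have hq1 : HasDerivAt (fun x : ℝ => (x - a₁) ^ 2 + c₁) (2 * (t - a₁)) t := by
    simpa using (((hasDerivAt_id t).sub_const a₁).pow 2).add_const c₁
  have hq2 : HasDerivAt (fun x : ℝ => (x - a₂) ^ 2 + c₂) (2 * (t - a₂)) t := by
    simpa using (((hasDerivAt_id t).sub_const a₂).pow 2).add_const c₂
  have hq3 : HasDerivAt (fun x : ℝ => (x - a₃) ^ 2 + c₃) (2 * (t - a₃)) t := by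
    simpa using (((hasDerivAt_id t).sub_const a₃).pow 2).add_const c₃
  have hn1 : HasDerivAt (fun x : ℝ => x - a₁) 1 t := (hasDerivAt_id t).sub_const a₁
  have hn2 : HasDerivAt (fun x : ℝ => x - a₂) 1 t := (hasDerivAt_id t).sub_const a₂
  have hn3 : HasDerivAt (fun x : ℝ => x - a₃) 1 t := (hasDerivAt_id t).sub_const a₃
  have h := ((hn1.div hq1 h₁).add (hn2.div hq2 h₂)).add (hn3.div hq3 h₃)
  rw [show deriv g t = _ from h.deriv]
  ring

private lemma q_pos {v p : ℝ × ℝ} (h : p ≠ v) :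
    0 < (p.1 - v.1) ^ 2 + (p.2 - v.2) ^ 2 := by
  rcases lt_or_eq_of_le (by positivity : (0:ℝ) ≤ (p.1 - v.1) ^ 2 + (p.2 - v.2) ^ 2) with h1 | h1
  · exact h1
  · exfalso
    apply h
    have h2 : (p.1 - v.1) ^ 2 = 0 ∧ (p.2 - v.2) ^ 2 = 0 := by constructor <;> nlinarith [sq_nonneg (p.1 - v.1), sq_nonneg (p.2 - v.2)]
    have := pow_eq_zero_iff (n := 2) (by norm_num) |>.mp h2.1
    have := pow_eq_zero_iff (n := 2) (by norm_num) |>.mp h2.2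
    ext <;> linarith

private lemma euc_abs (p : ℝ × ℝ) (w : ℂ) :
    eucDist (Complex.equivRealProdCLM w) p
      = ‖w - Complex.equivRealProdCLM.symm p‖ := by
  rw [Complex.norm_def, Complex.normSq_apply]
  simp [eucDist, Complex.equivRealProdCLM_apply, Complex.equivRealProdCLM_symm_apply]
  ring_nf

theorem stmt_19 (A B C : ℝ × ℝ) (hABC : AffineIndependent ℝ ![A, B, C])
    (Δ : Set (ℝ × ℝ)) (hΔ : Δ = convexHull ℝ {A, B, C})
    (φ : ℝ × ℝ → ℝ) (hφ : ∀ p, φ p = eucDist p A * eucDist p B * eucDist p C) :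
    HarmonicOn (fun p => Real.log (φ p)) (interior Δ \ {A, B, C}) ∧
    ∃ p ∈ frontier Δ, ∀ q ∈ Δ, φ q ≤ φ p := by
  refine ⟨?_, ?_⟩
  · -- harmonicity
    set s : Set (ℝ × ℝ) := interior Δ \ {A, B, C} with hs
    -- pointwise formula
    have keyf : ∀ x y : ℝ, (x - A.1) ^ 2 + (y - A.2) ^ 2 ≠ 0 →
        (x - B.1) ^ 2 + (y - B.2) ^ 2 ≠ 0 → (x - C.1) ^ 2 + (y - C.2) ^ 2 ≠ 0 →
        Real.log (φ (x, y)) = (Real.log ((x - A.1) ^ 2 + (y - A.2) ^ 2) +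
          Real.log ((x - B.1) ^ 2 + (y - B.2) ^ 2) +
          Real.log ((x - C.1) ^ 2 + (y - C.2) ^ 2)) / 2 := by
      intro x y hA hB hC
      have nA : (0:ℝ) ≤ (x - A.1) ^ 2 + (y - A.2) ^ 2 := by positivity
      have nB : (0:ℝ) ≤ (x - B.1) ^ 2 + (y - B.2) ^ 2 := by positivity
      have nC : (0:ℝ) ≤ (x - C.1) ^ 2 + (y - C.2) ^ 2 := by positivity
      have sA : Real.sqrt ((x - A.1) ^ 2 + (y - A.2) ^ 2) ≠ 0 :=
        (Real.sqrt_pos.mpr (lt_of_le_of_ne nA (Ne.symm hA))).ne'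
      have sB : Real.sqrt ((x - B.1) ^ 2 + (y - B.2) ^ 2) ≠ 0 :=
        (Real.sqrt_pos.mpr (lt_of_le_of_ne nB (Ne.symm hB))).ne'
      have sC : Real.sqrt ((x - C.1) ^ 2 + (y - C.2) ^ 2) ≠ 0 :=
        (Real.sqrt_pos.mpr (lt_of_le_of_ne nC (Ne.symm hC))).ne'
      rw [hφ]
      show Real.log (Real.sqrt _ * Real.sqrt _ * Real.sqrt _) = _
      rw [Real.log_mul (mul_ne_zero sA sB) sC, Real.log_mul sA sB,
        Real.log_sqrt nA, Real.log_sqrt nB, Real.log_sqrt nC]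
      ring
    have hps : ∀ p ∈ s, p ≠ A ∧ p ≠ B ∧ p ≠ C := by
      intro p hp
      have := hp.2
      simp only [Set.mem_insert_iff, Set.mem_singleton_iff, not_or] at this
      exact this
    constructor
    · -- ContDiffOn
      have hcd : ContDiffOn ℝ 2 (fun p : ℝ × ℝ => (Real.log ((p.1 - A.1) ^ 2 + (p.2 - A.2) ^ 2) +
          Real.log ((p.1 - B.1) ^ 2 + (p.2 - B.2) ^ 2) +
          Real.log ((p.1 - C.1) ^ 2 + (p.2 - C.2) ^ 2)) / 2) s := by
        have hq : ∀ v : ℝ × ℝ, ContDiff ℝ 2 (fun p : ℝ × ℝ => (p.1 - v.1) ^ 2 + (p.2 - v.2) ^ 2) :=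
          fun v => (((contDiff_fst).sub contDiff_const).pow 2).add
            (((contDiff_snd).sub contDiff_const).pow 2)
        have lA : ContDiffOn ℝ 2 (fun p : ℝ × ℝ => Real.log ((p.1 - A.1) ^ 2 + (p.2 - A.2) ^ 2)) s :=
          ((hq A).contDiffOn).log (fun p hp => (q_pos (hps p hp).1).ne')
        have lB : ContDiffOn ℝ 2 (fun p : ℝ × ℝ => Real.log ((p.1 - B.1) ^ 2 + (p.2 - B.2) ^ 2)) s :=
          ((hq B).contDiffOn).log (fun p hp => (q_pos (hps p hp).2.1).ne')
        have lC : ContDiffOn ℝ 2 (fun p : ℝ × ℝ => Real.log ((p.1 - C.1) ^ 2 + (p.2 - C.2) ^ 2)) s :=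
          ((hq C).contDiffOn).log (fun p hp => (q_pos (hps p hp).2.2).ne')
        exact ((lA.add lB).add lC).div_const 2
      refine hcd.congr ?_
      intro p hp
      obtain ⟨h1, h2, h3⟩ := hps p hp
      exact keyf p.1 p.2 (q_pos h1).ne' (q_pos h2).ne' (q_pos h3).ne'
    · intro p hp
      obtain ⟨h1, h2, h3⟩ := hps p hp
      have qA := q_pos h1
      have qB := q_pos h2
      have qC := q_pos h3
      -- x-slice
      have hx : (fun x => Real.log (φ (x, p.2))) =ᶠ[nhds p.1]
          (fun x => (Real.log ((x - A.1) ^ 2 + (p.2 - A.2) ^ 2) +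
            Real.log ((x - B.1) ^ 2 + (p.2 - B.2) ^ 2) +
            Real.log ((x - C.1) ^ 2 + (p.2 - C.2) ^ 2)) / 2) := by
        have cA : Continuous fun x : ℝ => (x - A.1) ^ 2 + (p.2 - A.2) ^ 2 :=
          ((continuous_id.sub continuous_const).pow 2).add continuous_const
        have cB : Continuous fun x : ℝ => (x - B.1) ^ 2 + (p.2 - B.2) ^ 2 :=
          ((continuous_id.sub continuous_const).pow 2).add continuous_const
        have cC : Continuous fun x : ℝ => (x - C.1) ^ 2 + (p.2 - C.2) ^ 2 :=
          ((continuous_id.sub continuous_const).pow 2).add continuous_const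
        filter_upwards [cA.continuousAt.eventually_ne qA.ne',
          cB.continuousAt.eventually_ne qB.ne', cC.continuousAt.eventually_ne qC.ne'] with x e1 e2 e3
        exact keyf x p.2 e1 e2 e3
      have hy : (fun y => Real.log (φ (p.1, y))) =ᶠ[nhds p.2]
          (fun y => (Real.log ((y - A.2) ^ 2 + (p.1 - A.1) ^ 2) +
            Real.log ((y - B.2) ^ 2 + (p.1 - B.1) ^ 2) +
            Real.log ((y - C.2) ^ 2 + (p.1 - C.1) ^ 2)) / 2) := by
        have cA : Continuous fun y : ℝ => (p.1 - A.1) ^ 2 + (y - A.2) ^ 2 :=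
          continuous_const.add ((continuous_id.sub continuous_const).pow 2)
        have cB : Continuous fun y : ℝ => (p.1 - B.1) ^ 2 + (y - B.2) ^ 2 :=
          continuous_const.add ((continuous_id.sub continuous_const).pow 2)
        have cC : Continuous fun y : ℝ => (p.1 - C.1) ^ 2 + (y - C.2) ^ 2 :=
          continuous_const.add ((continuous_id.sub continuous_const).pow 2)
        filter_upwards [cA.continuousAt.eventually_ne qA.ne',
          cB.continuousAt.eventually_ne qB.ne', cC.continuousAt.eventually_ne qC.ne'] with y e1 e2 e3
        rw [keyf p.1 y e1 e2 e3]
        ring_nf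
      rw [hx.deriv.deriv_eq, hy.deriv.deriv_eq]
      rw [slice_deriv2 A.1 B.1 C.1 _ _ _ p.1
          (by linarith) (by linarith) (by linarith),
        slice_deriv2 A.2 B.2 C.2 _ _ _ p.2
          (by nlinarith) (by nlinarith) (by nlinarith)]
      ring
  · -- maximum on the boundary, via the complex maximum modulus principle
    set L := Complex.equivRealProdCLM with hL
    set a := L.symm A
    set b := L.symm B
    set c := L.symm C
    set f : ℂ → ℂ := fun z => (z - a) * (z - b) * (z - c) with hf
    set T : Set ℂ := convexHull ℝ {a, b, c} with hT
    have himg : ⇑L '' T = Δ := by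
      rw [hT, hΔ]
      have := (Complex.equivRealProdLm.toLinearMap.toAffineMap).image_convexHull
        ({a, b, c} : Set ℂ)
      have hcoe : ⇑(Complex.equivRealProdLm.toLinearMap.toAffineMap) = ⇑L := rfl
      rw [hcoe] at this
      rw [this]
      congr 1
      simp only [Set.image_insert_eq, Set.image_singleton]
      simp [a, b, c]
    have hTconv : Convex ℝ T := convex_convexHull ℝ _
    have hTcomp : IsCompact T := (Set.toFinite _).isCompact_convexHull ℝ
    have hIntNe : (interior Δ).Nonempty := by
      rw [hΔ]
      rw [Convex.interior_nonempty_iff_affineSpan_eq_top (convex_convexHull ℝ _),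
        affineSpan_convexHull]
      have hr : ({A, B, C} : Set (ℝ × ℝ)) = Set.range ![A, B, C] := by
        simp [Matrix.range_cons, Matrix.range_empty]
        ext x; simp; tauto
      rw [hr, hABC.affineSpan_eq_top_iff_card_eq_finrank_add_one]
      simp
    have hUne : (interior T).Nonempty := by
      obtain ⟨x, hx⟩ := hIntNe
      refine ⟨L.symm x, ?_⟩
      have h2 := L.toHomeomorph.image_interior T
      rw [show (⇑L.toHomeomorph : ℂ → ℝ × ℝ) = ⇑L from rfl, himg] at h2
      rw [← h2] at hx
      obtain ⟨y, hy, hxy⟩ := hx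
      rwa [show L.symm x = y by rw [← hxy]; exact L.symm_apply_apply y]
    have hclosU : closure (interior T) = T := by
      refine le_antisymm (closure_minimal interior_subset hTcomp.isClosed) ?_
      intro x hx
      obtain ⟨y, hy⟩ := hUne
      have : Filter.Tendsto (fun n : ℕ => x + (1 / ((n : ℝ) + 1)) • (y - x))
          Filter.atTop (nhds x) := by
        have := (tendsto_one_div_add_atTop_nhds_zero_nat (𝕜 := ℝ)).smul_const (y - x)
        simpa using (tendsto_const_nhds.add this)
      refine mem_closure_of_tendsto this ?_
      filter_upwards [] with n
      refine hTconv.add_smul_sub_mem_interior hx hy ⟨by positivity, ?_⟩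
      rw [div_le_one (by positivity)]
      linarith [Nat.cast_nonneg (α := ℝ) n]
    obtain ⟨z, hzf, hzmax⟩ := Complex.exists_mem_frontier_isMaxOn_norm
      (hTcomp.isBounded.subset interior_subset) hUne
      ((((differentiable_id.sub_const a).mul (differentiable_id.sub_const b)).mul
        (differentiable_id.sub_const c)).diffContOnCl : DiffContOnCl ℂ f (interior T))
    rw [hclosU] at hzmax
    have hzT : z ∈ frontier T := by
      have : frontier (interior T) = T \ interior T := by
        rw [frontier, hclosU, interior_interior]
      rw [this] at hzf
      rw [frontier, hTcomp.isClosed.closure_eq]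
      exact hzf
    have key : ∀ w : ℂ, φ (L w) = ‖f w‖ := by
      intro w
      rw [hφ, hf]
      simp only [norm_mul]
      rw [euc_abs A w, euc_abs B w, euc_abs C w]
    refine ⟨L z, ?_, ?_⟩
    · have : ⇑L '' frontier T = frontier Δ := by
        have := L.toHomeomorph.image_frontier T
        rw [show (⇑L.toHomeomorph) = ⇑L from rfl] at this
        rw [this, himg]
      rw [← this]
      exact ⟨z, hzT, rfl⟩
    · intro q hq
      have hqT : L.symm q ∈ T := by
        rw [← himg] at hq
        obtain ⟨w, hw, hwq⟩ := hq
        rwa [← hwq, L.symm_apply_apply]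
      have := hzmax hqT
      simp only [Function.comp_apply] at this
      calc φ q = ‖f (L.symm q)‖ := by rw [← key (L.symm q), L.apply_symm_apply]
      _ ≤ ‖f z‖ := this
      _ = φ (L z) := (key z).symm
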